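/- Let S ⊂ ℝ, 𝓑 ⊂ ℝ² compact, and suppose G(a,s,t) decays rapidly as a → 0 uniformly for (s,t) ∈ S × 𝓑, i.e., for each k, sup_{(s,t)∈S×𝓑} |G(a,s,t)| ≤ C_k aᵏ. Define ĥ(ξ) = ∫₀^∞ ∫_𝓑 ∫_S G(a,s,t) ψ̂_{ast}(ξ) ds dt da/a³. Then for each k > 0, |ĥ(ξ)| ≤ C'_k |ξ|^{-k + 7/4}, so ĥ decays rapidly as |ξ| → ∞. -/

import Mathlib

noncomputable section
open MeasureTheory Real Complex FourierTransform Set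

abbrev E2 := EuclideanSpace ℝ (Fin 2)

/-- The frequency set `Γ(a,s) = {ξ : 1/2 ≤ a|ξ| ≤ 2, |s − ξ₂/ξ₁| ≤ √a}`. -/
def Gam (a s : ℝ) : Set E2 :=
  {ξ : E2 | 1/2 ≤ a * ‖ξ‖ ∧ a * ‖ξ‖ ≤ 2 ∧ |s - ξ 1 / ξ 0| ≤ Real.sqrt a}

lemma aux_bound (G : ℝ → ℝ → E2 → ℂ) (F : ℝ → ℝ → E2 → E2 → ℂ)
    (S : Set ℝ) (B : Set E2) (hS : IsCompact S) (hB : IsCompact B)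
    (m : ℕ) (Cm C' : ℝ) (hCm : 0 ≤ Cm) (hC' : 0 ≤ C')
    (hGm : ∀ (a s : ℝ) (t : E2), 0 < a → s ∈ S → t ∈ B → ‖G a s t‖ ≤ Cm * a ^ m)
    (hFsupp : ∀ (a s : ℝ) (t : E2) (ξ : E2), 0 < a → ξ ∉ Gam a s → F a s t ξ = 0)
    (hFbd : ∀ (a s : ℝ) (t : E2) (ξ : E2), 0 < a → ‖F a s t ξ‖ ≤ C' * a ^ ((3:ℝ)/4)) :
    ∃ K : ℝ, 0 ≤ K ∧ ∀ ξ : E2, 0 < ‖ξ‖ →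
      ‖∫ a in Set.Ioi (0:ℝ), (a ^ (-(3:ℝ)) : ℝ) •
          (∫ t in B, ∫ s in S, G a s t * F a s t ξ)‖ ≤
        K * ‖ξ‖ ^ ((5:ℝ)/4 - m) := by
  set vS : ℝ := (volume S).toReal with hvS
  set vB : ℝ := (volume B).toReal with hvB
  have hvS0 : 0 ≤ vS := ENNReal.toReal_nonneg
  have hvB0 : 0 ≤ vB := ENNReal.toReal_nonneg
  set C0 : ℝ := Cm * C' * vS * vB with hC0
  have hC00 : 0 ≤ C0 := by positivity
  refine ⟨2 * 2 ^ ((m:ℝ) + 4) * C0, by positivity, ?_⟩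
  intro ξ hr
  set r : ℝ := ‖ξ‖ with hrdef
  set f : ℝ → ℂ := fun a => (a ^ (-(3:ℝ)) : ℝ) •
      (∫ t in B, ∫ s in S, G a s t * F a s t ξ) with hf
  set I : Set ℝ := Icc (1/(2*r)) (2/r) with hI
  have hsub : I ⊆ Ioi (0:ℝ) := fun a ha => lt_of_lt_of_le (by positivity) ha.1
  -- outside I the integrand vanishes
  have hzero : ∀ a ∈ Ioi (0:ℝ) \ I, f a = 0 := by
    rintro a ⟨ha, haI⟩
    have ha' : (0:ℝ) < a := ha
    have hF0 : ∀ s t, F a s t ξ = 0 := by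
      intro s t
      apply hFsupp a s t ξ ha'
      intro hmem
      obtain ⟨h1, h2, -⟩ := hmem
      apply haI
      constructor
      · rw [div_le_iff₀ (by positivity)]; nlinarith
      · rw [le_div_iff₀ hr]; nlinarith
    simp only [hf, hF0, mul_zero, integral_zero, smul_zero]
  have heq : (∫ a in Ioi (0:ℝ), f a) = ∫ a in I, f a :=
    setIntegral_eq_of_subset_of_forall_diff_eq_zero measurableSet_Ioi hsub hzero
  set M : ℝ := 2 ^ ((m:ℝ) + 4) * r ^ ((9:ℝ)/4 - m) * C0 with hM
  have hM0 : 0 ≤ M := by positivity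
  -- pointwise bound on I
  have hpt : ∀ a ∈ I, ‖f a‖ ≤ M := by
    rintro a ⟨ha1, ha2⟩
    have ha : (0:ℝ) < a := lt_of_lt_of_le (by positivity) ha1
    set D : ℝ := Cm * a ^ m * (C' * a ^ ((3:ℝ)/4)) with hD
    have hD0 : 0 ≤ D := by positivity
    have hI1 : ∀ t, t ∈ B → ‖∫ s in S, G a s t * F a s t ξ‖ ≤ vS * D := by
      intro t ht
      calc ‖∫ s in S, G a s t * F a s t ξ‖ ≤ ∫ s in S, ‖G a s t * F a s t ξ‖ :=
            norm_integral_le_integral_norm _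
        _ ≤ ∫ _s in S, D := by
            apply integral_mono_of_nonneg (Filter.Eventually.of_forall fun s => norm_nonneg _)
              (integrableOn_const hS.measure_lt_top.ne)
            filter_upwards [ae_restrict_mem hS.measurableSet] with s hs
            rw [norm_mul]
            exact mul_le_mul (hGm a s t ha hs ht) (hFbd a s t ξ ha) (norm_nonneg _)
              (by positivity)
        _ = vS * D := by rw [setIntegral_const, smul_eq_mul]; rfl
    have hI2 : ‖∫ t in B, ∫ s in S, G a s t * F a s t ξ‖ ≤ vB * (vS * D) := by
      calc ‖∫ t in B, ∫ s in S, G a s t * F a s t ξ‖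
          ≤ ∫ t in B, ‖∫ s in S, G a s t * F a s t ξ‖ := norm_integral_le_integral_norm _
        _ ≤ ∫ _t in B, vS * D := by
            apply integral_mono_of_nonneg (Filter.Eventually.of_forall fun t => norm_nonneg _)
              (integrableOn_const hB.measure_lt_top.ne)
            filter_upwards [ae_restrict_mem hB.measurableSet] with t ht
            exact hI1 t ht
        _ = vB * (vS * D) := by rw [setIntegral_const, smul_eq_mul]; rfl
    have hfa : ‖f a‖ ≤ a ^ (-(3:ℝ)) * (vB * (vS * D)) := by
      rw [hf, norm_smul, Real.norm_eq_abs, abs_of_pos (Real.rpow_pos_of_pos ha _)]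
      exact mul_le_mul_of_nonneg_left hI2 (Real.rpow_pos_of_pos ha _).le
    -- power estimate
    have hpow : a ^ (-(3:ℝ)) * (a ^ m * a ^ ((3:ℝ)/4)) = a ^ ((m:ℝ) - 9/4) := by
      rw [← Real.rpow_natCast a m, ← Real.rpow_add ha, ← Real.rpow_add ha]
      congr 1; ring
    have hae : a ^ ((m:ℝ) - 9/4) ≤ 2 ^ ((m:ℝ) + 4) * r ^ ((9:ℝ)/4 - m) := by
      rcases le_or_gt 0 ((m:ℝ) - 9/4) with he | he
      · have h1 : a ^ ((m:ℝ) - 9/4) ≤ (2/r) ^ ((m:ℝ) - 9/4) :=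
          Real.rpow_le_rpow ha.le ha2 he
        have h2 : (2/r) ^ ((m:ℝ) - 9/4) = 2 ^ ((m:ℝ) - 9/4) * r ^ ((9:ℝ)/4 - m) := by
          rw [Real.div_rpow (by norm_num) hr.le, div_eq_mul_inv,
            ← Real.rpow_neg hr.le]
          norm_num
        have h3 : (2:ℝ) ^ ((m:ℝ) - 9/4) ≤ 2 ^ ((m:ℝ) + 4) :=
          Real.rpow_le_rpow_of_exponent_le one_le_two (by linarith)
        calc a ^ ((m:ℝ) - 9/4) ≤ 2 ^ ((m:ℝ) - 9/4) * r ^ ((9:ℝ)/4 - m) := by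
              rw [← h2]; exact h1
          _ ≤ 2 ^ ((m:ℝ) + 4) * r ^ ((9:ℝ)/4 - m) :=
              mul_le_mul_of_nonneg_right h3 (by positivity)
      · have h1 : a ^ ((m:ℝ) - 9/4) ≤ (1/(2*r)) ^ ((m:ℝ) - 9/4) :=
          Real.rpow_le_rpow_of_nonpos (by positivity) ha1 he.le
        have h2 : ((1:ℝ)/(2*r)) ^ ((m:ℝ) - 9/4) = 2 ^ ((9:ℝ)/4 - m) * r ^ ((9:ℝ)/4 - m) := by
          rw [one_div, Real.inv_rpow (by positivity), ← Real.rpow_neg (by positivity),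
            Real.mul_rpow (by norm_num) hr.le]
          ring_nf
        have h3 : (2:ℝ) ^ ((9:ℝ)/4 - m) ≤ 2 ^ ((m:ℝ) + 4) := by
          apply Real.rpow_le_rpow_of_exponent_le one_le_two
          have : (0:ℝ) ≤ m := Nat.cast_nonneg m
          linarith
        calc a ^ ((m:ℝ) - 9/4) ≤ 2 ^ ((9:ℝ)/4 - m) * r ^ ((9:ℝ)/4 - m) := by
              rw [← h2]; exact h1
          _ ≤ 2 ^ ((m:ℝ) + 4) * r ^ ((9:ℝ)/4 - m) :=
              mul_le_mul_of_nonneg_right h3 (by positivity)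
    calc ‖f a‖ ≤ a ^ (-(3:ℝ)) * (vB * (vS * D)) := hfa
      _ = a ^ ((m:ℝ) - 9/4) * C0 := by rw [← hpow, hD, hC0]; ring
      _ ≤ 2 ^ ((m:ℝ) + 4) * r ^ ((9:ℝ)/4 - m) * C0 :=
          mul_le_mul_of_nonneg_right hae hC00
      _ = M := rfl
  -- integrate the bound
  have hlen : (volume I).toReal ≤ 2/r := by
    rw [hI, Real.volume_Icc, ENNReal.toReal_ofReal
      (by rw [sub_nonneg, div_le_div_iff₀ (by positivity) hr]; linarith)]
    have : 0 ≤ 1/(2*r) := by positivity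
    linarith
  have hbd : ‖∫ a in Ioi (0:ℝ), f a‖ ≤ (2/r) * M := by
    rw [heq]
    calc ‖∫ a in I, f a‖ ≤ ∫ a in I, ‖f a‖ := norm_integral_le_integral_norm _
      _ ≤ ∫ _a in I, M := by
          apply integral_mono_of_nonneg (Filter.Eventually.of_forall fun a => norm_nonneg _)
            (integrableOn_const (by rw [hI, Real.volume_Icc]; exact ENNReal.ofReal_ne_top))
          filter_upwards [ae_restrict_mem measurableSet_Icc] with a ha
          exact hpt a ha
      _ = (volume I).toReal * M := by rw [setIntegral_const, smul_eq_mul]; rfl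
      _ ≤ (2/r) * M := mul_le_mul_of_nonneg_right hlen hM0
  refine hbd.trans (le_of_eq ?_)
  rw [hM]
  have : (2:ℝ)/r * (2 ^ ((m:ℝ) + 4) * r ^ ((9:ℝ)/4 - m) * C0)
      = 2 * 2 ^ ((m:ℝ) + 4) * C0 * (r⁻¹ * r ^ ((9:ℝ)/4 - m)) := by ring
  rw [this, ← Real.rpow_neg_one r, ← Real.rpow_add hr]
  have h9 : (-1 + ((9:ℝ)/4 - (m:ℝ))) = 5/4 - m := by ring
  rw [h9]

/-- if `G(a,s,t)` decays rapidly as `a → 0` uniformly on `S × 𝓑`, then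
`ĥ(ξ) = ∫₀^∞ ∫_𝓑 ∫_S G(a,s,t) ψ̂_{ast}(ξ) ds dt da/a³` satisfies
`|ĥ(ξ)| ≤ C'_k |ξ|^{-k+7/4}`, hence decays rapidly as `|ξ| → ∞`. -/
theorem shearlet_synthesis_rapid_decay
    (G : ℝ → ℝ → E2 → ℂ) (F : ℝ → ℝ → E2 → E2 → ℂ)
    (S : Set ℝ) (B : Set E2) (hS : IsCompact S) (hB : IsCompact B)
    (hG : ∀ k : ℕ, ∃ Ck : ℝ, ∀ (a s : ℝ) (t : E2), 0 < a → s ∈ S → t ∈ B →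
      ‖G a s t‖ ≤ Ck * a ^ k)
    (hFsupp : ∀ (a s : ℝ) (t : E2) (ξ : E2), 0 < a → ξ ∉ Gam a s → F a s t ξ = 0)
    (hFbd : ∃ C' : ℝ, ∀ (a s : ℝ) (t : E2) (ξ : E2), 0 < a →
      ‖F a s t ξ‖ ≤ C' * a ^ ((3:ℝ)/4)) :
    ∀ k : ℕ, 0 < k → ∃ Ck : ℝ, ∀ ξ : E2,
      ‖∫ a in Set.Ioi (0:ℝ), (a ^ (-(3:ℝ)) : ℝ) •
          (∫ t in B, ∫ s in S, G a s t * F a s t ξ)‖ ≤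
        Ck * ‖ξ‖ ^ (-(k:ℝ) + 7/4) := by
  intro k hk
  obtain ⟨C', hC'bd⟩ := hFbd
  have hC'bd' : ∀ (a s : ℝ) (t : E2) (ξ : E2), 0 < a →
      ‖F a s t ξ‖ ≤ max C' 0 * a ^ ((3:ℝ)/4) := fun a s t ξ ha =>
    (hC'bd a s t ξ ha).trans (mul_le_mul_of_nonneg_right (le_max_left _ _)
      (Real.rpow_nonneg ha.le _))
  have hGm : ∀ m : ℕ, ∃ Cm : ℝ, 0 ≤ Cm ∧ ∀ (a s : ℝ) (t : E2), 0 < a → s ∈ S → t ∈ B →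
      ‖G a s t‖ ≤ Cm * a ^ m := by
    intro m
    obtain ⟨Cm, hCm⟩ := hG m
    exact ⟨max Cm 0, le_max_right _ _, fun a s t ha hs ht =>
      (hCm a s t ha hs ht).trans (mul_le_mul_of_nonneg_right (le_max_left _ _)
        (pow_nonneg ha.le _))⟩
  obtain ⟨C1, hC10, hG1⟩ := hGm k
  obtain ⟨C2, hC20, hG2⟩ := hGm (k - 1)
  obtain ⟨K1, hK10, hK1⟩ := aux_bound G F S B hS hB k C1 (max C' 0) hC10 (le_max_right _ _)
    hG1 hFsupp hC'bd'
  obtain ⟨K2, hK20, hK2⟩ := aux_bound G F S B hS hB (k - 1) C2 (max C' 0) hC20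
    (le_max_right _ _) hG2 hFsupp hC'bd'
  refine ⟨K1 + K2, ?_⟩
  intro ξ
  rcases eq_or_lt_of_le (norm_nonneg ξ) with hr0 | hr
  · -- ‖ξ‖ = 0 : the integrand vanishes
    have hz : ∀ a ∈ Ioi (0:ℝ), ((a ^ (-(3:ℝ)) : ℝ) •
        (∫ t in B, ∫ s in S, G a s t * F a s t ξ) : ℂ) = 0 := by
      intro a ha
      have ha' : (0:ℝ) < a := ha
      have hF0 : ∀ s t, F a s t ξ = 0 := by
        intro s t
        apply hFsupp a s t ξ ha'
        intro hmem
        obtain ⟨h1, -, -⟩ := hmem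
        rw [← hr0] at h1
        nlinarith
      simp only [hF0, mul_zero, integral_zero, smul_zero]
    rw [setIntegral_congr_fun measurableSet_Ioi hz, integral_zero, norm_zero, ← hr0]
    rw [Real.zero_rpow]
    · positivity
    · rcases Nat.lt_or_ge k 2 with h | h
      · interval_cases k
        · norm_num
      · have : (2:ℝ) ≤ k := by exact_mod_cast h
        intro hcon
        nlinarith
  · rcases le_or_gt 1 ‖ξ‖ with h1 | h1
    · -- large frequency: use exponent k
      have hb := hK1 ξ hr
      have hmono : ‖ξ‖ ^ ((5:ℝ)/4 - k) ≤ ‖ξ‖ ^ (-(k:ℝ) + 7/4) :=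
        Real.rpow_le_rpow_of_exponent_le h1 (by linarith)
      calc ‖∫ a in Set.Ioi (0:ℝ), (a ^ (-(3:ℝ)) : ℝ) •
            (∫ t in B, ∫ s in S, G a s t * F a s t ξ)‖
          ≤ K1 * ‖ξ‖ ^ ((5:ℝ)/4 - k) := hb
        _ ≤ K1 * ‖ξ‖ ^ (-(k:ℝ) + 7/4) := mul_le_mul_of_nonneg_left hmono hK10
        _ ≤ (K1 + K2) * ‖ξ‖ ^ (-(k:ℝ) + 7/4) := by
            apply mul_le_mul_of_nonneg_right (by linarith) (Real.rpow_nonneg hr.le _)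
    · -- small frequency: use exponent k - 1
      have hb := hK2 ξ hr
      have hcast : ((k - 1 : ℕ) : ℝ) = (k:ℝ) - 1 := by
        rw [Nat.cast_sub hk]; norm_num
      have hmono : ‖ξ‖ ^ ((5:ℝ)/4 - (k - 1 : ℕ)) ≤ ‖ξ‖ ^ (-(k:ℝ) + 7/4) := by
        rw [hcast]
        exact Real.rpow_le_rpow_of_exponent_ge hr h1.le (by linarith)
      calc ‖∫ a in Set.Ioi (0:ℝ), (a ^ (-(3:ℝ)) : ℝ) •
            (∫ t in B, ∫ s in S, G a s t * F a s t ξ)‖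
          ≤ K2 * ‖ξ‖ ^ ((5:ℝ)/4 - (k - 1 : ℕ)) := hb
        _ ≤ K2 * ‖ξ‖ ^ (-(k:ℝ) + 7/4) := mul_le_mul_of_nonneg_left hmono hK20
        _ ≤ (K1 + K2) * ‖ξ‖ ^ (-(k:ℝ) + 7/4) := by
            apply mul_le_mul_of_nonneg_right (by linarith) (Real.rpow_nonneg hr.le _)
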